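/- arXiv:2603.25798 — 2 statements merged into one kernel-verified Lean document; each statement's English description precedes it below -/
import Mathlib

section
/- For every class c with c < C and every spatial location (x, y), define the Grad-CAM weight α^c_k = (1/Z) · Σ_{i<m} Σ_{j<n} D(Y^c)(A)(e_{k,i,j}), where D(Y^c)(A) denotes the Fréchet derivative of the map A ↦ Y^c(A) at the point A and e_{k,i,j} is the standard basis element of the product space (the function that is 1 at coordinate (k,i,j) and 0 elsewhere), and define the Grad-CAM saliency value at (x,y) as ReLU(Σ_{k<K} α^c_k · A k x y). Then this Grad-CAM saliency value equals the average of the R penultimate feature maps assigned to class c: ReLU(Σ_{k<K} α^c_k · A k x y) = (1/R) · Σ_{k<K, ⌊k/R⌋ = c} A k x y. -/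
/-!
The pre-logit `Y^c` is a linear functional on a finite-dimensional space, so its Fréchet
derivative at every point is `Y^c` itself. On the basis vector `e_{k,i,j}` it takes the value
`1/R` if feature map `k` belongs to class `c` and `0` otherwise, independently of `(i, j)`;
averaging over the `Z` spatial positions therefore gives the same Grad-CAM weight. The weighted
sum is then the class average of the nonnegative feature maps, on which `ReLU` acts trivially.
-/

open Finset

theorem fderiv_apply_of_isLinearMap {𝕜 E F : Type*} [NontriviallyNormedField 𝕜]
    [CompleteSpace 𝕜] [NormedAddCommGroup E] [NormedSpace 𝕜 E] [FiniteDimensional 𝕜 E]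
    [NormedAddCommGroup F] [NormedSpace 𝕜 F] {f : E → F} (hf : IsLinearMap 𝕜 f) (a v : E) :
    fderiv 𝕜 f a v = f v := by
  have hderiv : HasFDerivAt f (IsLinearMap.mk' f hf).toContinuousLinearMap a :=
    (IsLinearMap.mk' f hf).toContinuousLinearMap.hasFDerivAt
  rw [hderiv.fderiv]
  rfl

section BlockSum

variable {ι α β : Type*} [Fintype α] [Fintype β]

theorem isLinearMap_mul_sum_sum_sum (r : ℝ) (S : Finset ι) :
    IsLinearMap ℝ (fun B : ι → α → β → ℝ => r * ∑ k ∈ S, ∑ x, ∑ y, B k x y) where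
  map_add B₁ B₂ := by simp only [Pi.add_apply, sum_add_distrib, mul_add]
  map_smul s B := by simp only [Pi.smul_apply, smul_eq_mul, ← mul_sum]; ring

theorem sum_sum_sum_ite_eq_and [DecidableEq ι] [DecidableEq α] [DecidableEq β]
    (S : Finset ι) (k : ι) (i : α) (j : β) :
    ∑ k' ∈ S, ∑ x, ∑ y, (if k' = k ∧ x = i ∧ y = j then (1 : ℝ) else 0) =
      if k ∈ S then 1 else 0 := by
  simp [ite_and, sum_ite_eq']

end BlockSum

theorem one_div_mul_sum_sum_const {m n : ℕ} (hm : 1 ≤ m) (hn : 1 ≤ n) (a : ℝ) :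
    1 / ((m * n : ℕ) : ℝ) * ∑ _i : Fin m, ∑ _j : Fin n, a = a := by
  have hm₀ : (m : ℝ) ≠ 0 := by positivity
  have hn₀ : (n : ℝ) ≠ 0 := by positivity
  simp only [sum_const, card_univ, Fintype.card_fin, nsmul_eq_mul]
  push_cast
  field_simp

theorem facnn_gradcam_equivalence_general
    (R m n : ℕ) (hm : 1 ≤ m) (hn : 1 ≤ n)
    (K : ℕ) (Z : ℕ) (hZ : Z = m * n)
    (A : Fin K → Fin m → Fin n → ℝ)
    (hA : ∀ k x y, 0 ≤ A k x y)
    (Y : ℕ → (Fin K → Fin m → Fin n → ℝ) → ℝ)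
    (hY : ∀ c (B : Fin K → Fin m → Fin n → ℝ),
      Y c B = (1 / (R : ℝ)) *
        ∑ k ∈ Finset.univ.filter (fun k : Fin K => (k : ℕ) / R = c),
          ∑ x : Fin m, ∑ y : Fin n, B k x y)
    (e : Fin K → Fin m → Fin n → (Fin K → Fin m → Fin n → ℝ))
    (he : ∀ k i j, e k i j =
      fun k' i' j' => if k' = k ∧ i' = i ∧ j' = j then (1 : ℝ) else 0)
    (α : ℕ → Fin K → ℝ)
    (hα : ∀ c k, α c k = (1 / (Z : ℝ)) *
      ∑ i : Fin m, ∑ j : Fin n, fderiv ℝ (Y c) A (e k i j))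
    (c : ℕ) (x : Fin m) (y : Fin n) :
    max 0 (∑ k : Fin K, α c k * A k x y) =
      (1 / (R : ℝ)) *
        ∑ k ∈ Finset.univ.filter (fun k : Fin K => (k : ℕ) / R = c),
          A k x y := by
  set S := univ.filter fun k : Fin K => (k : ℕ) / R = c
  have hlinear : IsLinearMap ℝ (Y c) := by
    rw [show Y c = _ from funext (hY c)]
    exact isLinearMap_mul_sum_sum_sum _ S
  have hgrad (k : Fin K) (i : Fin m) (j : Fin n) :
      fderiv ℝ (Y c) A (e k i j) = if k ∈ S then 1 / (R : ℝ) else 0 := by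
    rw [fderiv_apply_of_isLinearMap hlinear, hY, he, sum_sum_sum_ite_eq_and, mul_ite, mul_one,
      mul_zero]
  have hweight (k : Fin K) : α c k = if k ∈ S then 1 / (R : ℝ) else 0 := by
    simp only [hα, hgrad, hZ, one_div_mul_sum_sum_const hm hn]
  have hsaliency : ∑ k, α c k * A k x y = 1 / (R : ℝ) * ∑ k ∈ S, A k x y := by
    simp only [hweight, ite_mul, zero_mul, Fintype.sum_ite_mem, mul_sum]
  rw [hsaliency]
  exact max_eq_right (mul_nonneg (by positivity) (sum_nonneg fun k _ => hA k x y))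

/-- Theorem 1, Grad-CAM equivalence:
For every class `c < C` and spatial location `(x, y)`, with Grad-CAM weights
`α^c_k = (1/Z) · Σ_{i,j} D(Y^c)(A)(e_{k,i,j})` defined via the Fréchet derivative
of the 3D global average pooling pre-logit `Y^c` at `A`, the Grad-CAM saliency
`ReLU(Σ_k α^c_k · A k x y)` equals the plain average of the `R` penultimate
feature maps assigned to class `c`. -/
theorem facnn_gradcam_equivalence
    (C R m n : ℕ) (hC : 1 ≤ C) (hR : 1 ≤ R) (hm : 1 ≤ m) (hn : 1 ≤ n)
    (K : ℕ) (hK : K = C * R) (Z : ℕ) (hZ : Z = m * n)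
    (A : Fin K → Fin m → Fin n → ℝ)
    (hA : ∀ k x y, 0 ≤ A k x y)
    (Y : ℕ → (Fin K → Fin m → Fin n → ℝ) → ℝ)
    (hY : ∀ c (B : Fin K → Fin m → Fin n → ℝ),
      Y c B = (1 / (R : ℝ)) *
        ∑ k ∈ Finset.univ.filter (fun k : Fin K => (k : ℕ) / R = c),
          ∑ x : Fin m, ∑ y : Fin n, B k x y)
    (e : Fin K → Fin m → Fin n → (Fin K → Fin m → Fin n → ℝ))
    (he : ∀ k i j, e k i j =
      fun k' i' j' => if k' = k ∧ i' = i ∧ j' = j then (1 : ℝ) else 0)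
    (α : ℕ → Fin K → ℝ)
    (hα : ∀ c k, α c k = (1 / (Z : ℝ)) *
      ∑ i : Fin m, ∑ j : Fin n, fderiv ℝ (Y c) A (e k i j))
    (c : ℕ) (hc : c < C) (x : Fin m) (y : Fin n) :
    max 0 (∑ k : Fin K, α c k * A k x y) =
      (1 / (R : ℝ)) *
        ∑ k ∈ Finset.univ.filter (fun k : Fin K => (k : ℕ) / R = c),
          A k x y :=
  facnn_gradcam_equivalence_general R m n hm hn K Z hZ A hA Y hY e he α hα c x y
end

section
/- For every L with 1 ≤ L ≤ N, the rescaled features satisfy the bounded increment property: |S_L − S_{L−1}| ≤ 1/N. -/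
/-! Multiplying the recursion by `L` turns it into `L X_L = ReLU((L - 1) X_{L-1} + tanh f_L)`, so
`N (S_L - S_{L-1}) = ReLU(a + t) - a` with `a = (L - 1) X_{L-1} ≥ 0` and `|t| < 1`. Since ReLU is
1-Lipschitz and fixes `a`, this difference is at most `|t|` in absolute value. -/

lemma abs_max_zero_add_sub_le_abs {a : ℝ} (ha : 0 ≤ a) (t : ℝ) :
    |max 0 (a + t) - a| ≤ |t| := by
  simpa [max_comm, max_eq_left ha] using abs_max_sub_max_le_abs (a + t) a 0

lemma mul_max_zero_dampened {ℓ : ℝ} (hℓ : 0 < ℓ) (x t : ℝ) :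
    ℓ * max 0 ((1 - 1 / ℓ) * x + (1 / ℓ) * t) = max 0 ((ℓ - 1) * x + t) := by
  rw [mul_max_of_nonneg _ _ hℓ.le, mul_zero]
  congr 1
  field_simp

theorem facnn_bounded_increment_general
    (N : ℕ) (f : ℕ → ℝ) (X S : ℕ → ℝ)
    (hX : ∀ L, 1 ≤ L → L ≤ N →
      X L = max 0 ((1 - 1 / (L : ℝ)) * X (L - 1)
        + (1 / (L : ℝ)) * Real.tanh (f L)))
    (hS0 : S 0 = 0)
    (hS : ∀ L, 1 ≤ L → L ≤ N → S L = ((L : ℝ) / (N : ℝ)) * X L) :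
    ∀ L, 1 ≤ L → L ≤ N → |S L - S (L - 1)| ≤ 1 / (N : ℝ) := by
  intro L hL hLN
  have hSX : ∀ k ≤ N, S k = (k : ℝ) / N * X k := by
    intro k hk
    rcases Nat.eq_zero_or_pos k with rfl | hk0
    · simp [hS0]
    · exact hS k hk0 hk
  set a := ((L - 1 : ℕ) : ℝ) * X (L - 1)
  have ha : 0 ≤ a := by
    rcases Nat.eq_zero_or_pos (L - 1) with h0 | hpos
    · simp [a, h0]
    · exact mul_nonneg (Nat.cast_nonneg _) (hX (L - 1) hpos (by omega) ▸ le_max_left _ _)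
  have hLX : (L : ℝ) * X L = max 0 (a + Real.tanh (f L)) := by
    rw [hX L hL hLN, mul_max_zero_dampened (by positivity), ← Nat.cast_pred hL]
  have hincr : S L - S (L - 1) = 1 / N * (max 0 (a + Real.tanh (f L)) - a) := by
    rw [hSX L hLN, hSX (L - 1) (by omega), ← hLX]
    ring
  calc |S L - S (L - 1)| = 1 / N * |max 0 (a + Real.tanh (f L)) - a| := by
        rw [hincr, abs_mul, abs_of_nonneg (by positivity)]
    _ ≤ 1 / N * 1 := by
        gcongr
        exact (abs_max_zero_add_sub_le_abs ha _).trans (Real.abs_tanh_lt_one _).le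
    _ = 1 / N := mul_one _

/-- Theorem 2, bounded increment through depth:
With the dampened skip connection `X_L = ReLU((1 − 1/L)·X_{L−1} + (1/L)·tanh(f_L))`
and rescaled features `S_0 = 0`, `S_L = (L/N)·X_L`, for every `1 ≤ L ≤ N` we have
`|S_L − S_{L−1}| ≤ 1/N`. -/
theorem facnn_bounded_increment
    (N : ℕ) (hN : 1 ≤ N) (f : ℕ → ℝ) (X S : ℕ → ℝ)
    (hX : ∀ L, 1 ≤ L → L ≤ N →
      X L = max 0 ((1 - 1 / (L : ℝ)) * X (L - 1)
        + (1 / (L : ℝ)) * Real.tanh (f L)))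
    (hS0 : S 0 = 0)
    (hS : ∀ L, 1 ≤ L → L ≤ N → S L = ((L : ℝ) / (N : ℝ)) * X L) :
    ∀ L, 1 ≤ L → L ≤ N → |S L - S (L - 1)| ≤ 1 / (N : ℝ) :=
  facnn_bounded_increment_general N f X S hX hS0 hS
end
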